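/- In dimension 3, the Clifford homomorphisms satisfy: -(j+1/2)·((2j+3)/(4(j+1)))π⁻_{j+1}(e_k)π⁺_j(e_l) + (1/((2j+3)(2j+1)))π_j(e_k)π_j(e_l) + (j+3/2)·((2j+1)/(4(j+1)))π⁺_{j-1}(e_k)π⁻_j(e_l) = (1/4)π_j([e_k,e_l]) as maps W_j → W_j. -/

import Mathlib

/-!
The Casimir `C = Σᵢ ρ(eᵢ)²` of `W ⊗ ℂ³ = ι₀ W ⊕ ι₋ W₋ ⊕ ι₊ W₊` acts on the three summands by
the scalars `c₀, c₋, c₊` (the Casimirs of `W`, `W₋`, `W₊`), so the `(k, l)` blocks `X₀, X₋, X₊`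
of the three projections `ι ι*` satisfy the Vandermonde system `Σ c_s^n X_s = block_{kl}(Cⁿ)`,
`n = 0, 1, 2`. On the other hand `ρ(eᵢ) = Aᵢ ⊗ 1 + 1 ⊗ ad(eᵢ)`, so
`C = (c₀ - 8) + 2 Σᵢ Aᵢ ⊗ ad(eᵢ)`, whose blocks are explicit; the blocks of `C²` follow by block
multiplication and an `ε`-contraction, which brings in `Σᵢ Aᵢ²` once more. Both products `π⁻π⁺`
and `π⁺π⁻` are multiples of `X₊` and `X₋`, and solving the system for them gives the relation.
-/

/-- The Levi-Civita symbol on `Fin 3`. -/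
def epsLC (i j k : Fin 3) : ℤ :=
  ((j.val : ℤ) - i.val) * ((k.val : ℤ) - j.val) * ((k.val : ℤ) - i.val) / 2

/-- `φ ⊗ e_k ∈ W ⊗ ℂ³`, with `W ⊗ ℂ³` modelled as `PiLp 2 (Fin 3 → W)`. -/
noncomputable def tensE (W : Type*) [NormedAddCommGroup W] [InnerProductSpace ℂ W]
    (k : Fin 3) : W →ₗ[ℂ] PiLp 2 fun _ : Fin 3 => W :=
  (WithLp.linearEquiv 2 ℂ (∀ _ : Fin 3, W)).symm.toLinearMap ∘ₗ
    LinearMap.single ℂ (fun _ : Fin 3 => W) k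

theorem pow_eq_sum_smul_of_mul_eq_smul {R A ι : Type*} [CommSemiring R] [Semiring A]
    [Algebra R A] [Fintype ι] {T : A} {P : ι → A} {c : ι → R} (hP : ∑ s, P s = 1)
    (hT : ∀ s, T * P s = c s • P s) (n : ℕ) : T ^ n = ∑ s, c s ^ n • P s := by
  induction n with
  | zero => simpa using hP.symm
  | succ n ih =>
    rw [pow_succ', ih, Finset.mul_sum]
    simp only [mul_smul_comm, hT, smul_smul, pow_succ]

theorem sum_comp_self_comp_of_intertwines {R M N ι : Type*} [CommSemiring R] [AddCommMonoid M]
    [Module R M] [AddCommMonoid N] [Module R N] [Fintype ι] {B : ι → Module.End R M}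
    {ρ : ι → Module.End R N} {f : M →ₗ[R] N} {c : R} (hf : ∀ i, f ∘ₗ B i = ρ i ∘ₗ f)
    (hB : ∑ i, B i ∘ₗ B i = c • LinearMap.id) :
    (∑ i, ρ i ∘ₗ ρ i) ∘ₗ f = c • f := by
  ext x
  have hfx (i : ι) (y : M) : ρ i (f y) = f (B i y) := (LinearMap.congr_fun (hf i) y).symm
  simpa [LinearMap.sum_apply, hfx] using congr_arg f (LinearMap.congr_fun hB x)

theorem epsLC_cyclic_neg : ∀ i k l : Fin 3, epsLC i l k = -epsLC k l i := by decide

theorem sum_epsLC_mul_epsLC : ∀ p k i l : Fin 3, ∑ b, epsLC p b k * epsLC i l b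
    = (if i = k ∧ p = l then 1 else 0) - (if i = p ∧ k = l then 1 else 0) := by decide

theorem sum_sum_epsLC_mul_epsLC :
    ∀ k l : Fin 3, ∑ i, ∑ b, 2 * epsLC i l b * (2 * epsLC i b k) = if k = l then -8 else 0 := by
  decide

section CrossBlock

variable {R M : Type*} [CommRing R] [AddCommGroup M] [Module R M]

/-- The `(k, l)` block of `½ Σᵢ Aᵢ ⊗ ad(eᵢ)` on `M ⊗ R³`. -/
def crossBlock (A : Fin 3 → Module.End R M) (k l : Fin 3) : Module.End R M :=
  ∑ i, (epsLC i l k : R) • A i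

theorem two_smul_crossBlock {A : Fin 3 → Module.End R M}
    (hA : ∀ k l, A k ∘ₗ A l - A l ∘ₗ A k = ∑ m, ((2 * epsLC k l m : ℤ) : R) • A m) (k l : Fin 3) :
    (2 : R) • crossBlock A k l = A l * A k - A k * A l := by
  rw [Module.End.mul_eq_comp, Module.End.mul_eq_comp, ← neg_sub, hA, crossBlock, Finset.smul_sum,
    ← Finset.sum_neg_distrib]
  refine Finset.sum_congr rfl fun i _ => ?_
  rw [smul_smul, ← neg_smul, epsLC_cyclic_neg]
  push_cast
  ring_nf

theorem sum_crossBlock_mul_crossBlock {A : Fin 3 → Module.End R M} {c : R}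
    (hA : ∑ i, A i ∘ₗ A i = c • LinearMap.id) (k l : Fin 3) :
    ∑ b, crossBlock A k b * crossBlock A b l = A l * A k - (if k = l then c else 0) • 1 := by
  have hcontract (i p : Fin 3) : ∑ b, (epsLC p b k : R) * epsLC i l b
      = (if i = k ∧ p = l then 1 else 0) - (if i = p ∧ k = l then 1 else 0) := by
    have h := congr_arg (Int.cast : ℤ → R) (sum_epsLC_mul_epsLC p k i l)
    push_cast at h
    exact h
  calc ∑ b, crossBlock A k b * crossBlock A b l
      = ∑ i, ∑ p, (∑ b, (epsLC p b k : R) * epsLC i l b) • (A p * A i) := by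
        simp only [crossBlock, Finset.sum_mul, Finset.mul_sum, smul_mul_smul_comm,
          Finset.sum_smul]
        rw [Finset.sum_comm]
        exact Finset.sum_congr rfl fun i _ => Finset.sum_comm
    _ = A l * A k - (if k = l then c else 0) • 1 := by
        have hA' : ∑ i, A i * A i = c • 1 := hA
        simp only [hcontract, sub_smul, Finset.sum_sub_distrib, ite_smul, one_smul, zero_smul,
          ite_and, Finset.sum_ite_irrel, Finset.sum_ite_eq', Finset.sum_ite_eq, Finset.mem_univ,
          if_true, Finset.sum_const_zero, ← hA']

end CrossBlock

section Blocks

variable {W : Type*} [NormedAddCommGroup W] [InnerProductSpace ℂ W]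

local notation "𝕍" => PiLp 2 fun _ : Fin 3 => W

theorem tensE_apply (k : Fin 3) (φ : W) : tensE W k φ = PiLp.single 2 k φ := rfl

noncomputable def block (k l : Fin 3) : Module.End ℂ 𝕍 →ₗ[ℂ] Module.End ℂ W :=
  LinearMap.llcomp ℂ W 𝕍 W (PiLp.projₗ 2 (fun _ : Fin 3 => W) k) ∘ₗ
    LinearMap.lcomp ℂ 𝕍 (tensE W l)

theorem block_apply (k l : Fin 3) (T : Module.End ℂ 𝕍) (φ : W) :
    block k l T φ = T (tensE W l φ) k := rfl

theorem block_mul (k l : Fin 3) (S T : Module.End ℂ 𝕍) :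
    block k l (S * T) = ∑ b, block k b S * block b l T := by
  ext φ
  have hT : T (tensE W l φ) = ∑ b, tensE W b (T (tensE W l φ) b) := by
    ext m
    simp [tensE_apply]
  simp only [Module.End.mul_apply, block_apply, LinearMap.sum_apply]
  conv_lhs => rw [hT, map_sum]
  simp

theorem block_one (k l : Fin 3) :
    block k l (1 : Module.End ℂ 𝕍) = if k = l then 1 else 0 := by
  ext φ
  split_ifs with h <;> simp [block_apply, tensE_apply, h]

theorem block_eq_of_apply {T : Module.End ℂ 𝕍} {B : Module.End ℂ W} {k : Fin 3}
    (hT : ∀ f i, WithLp.equiv 2 (∀ _ : Fin 3, W) (T f) i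
      = B (WithLp.equiv 2 (∀ _ : Fin 3, W) f i)
        + ∑ m, ((2 * epsLC k m i : ℤ) : ℂ) • WithLp.equiv 2 (∀ _ : Fin 3, W) f m) (b l : Fin 3) :
    block b l T = (if b = l then B else 0) + ((2 * epsLC k l b : ℤ) : ℂ) • 1 := by
  ext φ
  have hφ := hT (tensE W l φ) b
  simp only [WithLp.equiv_apply] at hφ
  rw [LinearMap.add_apply, block_apply, hφ]
  split_ifs with h <;> simp [tensE_apply, h]

theorem block_sum_mul_self {A : Fin 3 → Module.End ℂ W} {ρ : Fin 3 → Module.End ℂ 𝕍} {c : ℂ}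
    (hρ : ∀ k f i, WithLp.equiv 2 (∀ _ : Fin 3, W) (ρ k f) i
      = A k (WithLp.equiv 2 (∀ _ : Fin 3, W) f i)
        + ∑ m, ((2 * epsLC k m i : ℤ) : ℂ) • WithLp.equiv 2 (∀ _ : Fin 3, W) f m)
    (hA : ∑ i, A i ∘ₗ A i = c • LinearMap.id) (k l : Fin 3) :
    block k l (∑ i, ρ i * ρ i)
      = (if k = l then c - 8 else 0) • 1 + (4 : ℂ) • crossBlock A k l := by
  have hA' : ∑ i, A i * A i = c • 1 := hA
  have heps : ∑ i, ∑ b, ((2 * epsLC i l b : ℤ) : ℂ) * ((2 * epsLC i b k : ℤ) : ℂ)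
      = if k = l then -8 else 0 := by
    have h := congr_arg (Int.cast : ℤ → ℂ) (sum_sum_epsLC_mul_epsLC k l)
    push_cast at h ⊢
    exact h
  simp only [map_sum, block_mul, block_eq_of_apply (hρ _), add_mul, mul_add, ite_mul, mul_ite,
    zero_mul, mul_zero, smul_add, smul_ite, smul_zero, smul_smul, smul_mul_assoc, mul_smul_comm,
    one_mul, mul_one, Finset.sum_add_distrib, Finset.sum_ite_eq, Finset.sum_ite_eq',
    Finset.mem_univ, if_true, ← Finset.sum_smul, heps, Finset.sum_ite_irrel, Finset.sum_const_zero, hA']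
  have hcross : ∑ i, ((2 * epsLC i l k : ℤ) : ℂ) • A i = (2 : ℂ) • crossBlock A k l := by
    simp only [crossBlock, Finset.smul_sum, smul_smul]
    push_cast
    rfl
  rw [hcross]
  split_ifs <;> module

theorem block_sum_mul_self_sq {A : Fin 3 → Module.End ℂ W} {ρ : Fin 3 → Module.End ℂ 𝕍} {c : ℂ}
    (hρ : ∀ k f i, WithLp.equiv 2 (∀ _ : Fin 3, W) (ρ k f) i
      = A k (WithLp.equiv 2 (∀ _ : Fin 3, W) f i)
        + ∑ m, ((2 * epsLC k m i : ℤ) : ℂ) • WithLp.equiv 2 (∀ _ : Fin 3, W) f m)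
    (hA : ∑ i, A i ∘ₗ A i = c • LinearMap.id) (k l : Fin 3) :
    block k l ((∑ i, ρ i * ρ i) ^ 2)
      = (if k = l then (c - 8) ^ 2 - 16 * c else 0) • 1 + (8 * (c - 8)) • crossBlock A k l
        + (16 : ℂ) • (A l * A k) := by
  simp only [sq, block_mul, block_sum_mul_self hρ hA, add_mul, mul_add, ite_smul, zero_smul,
    ite_mul, mul_ite, zero_mul, mul_zero, smul_mul_smul_comm, mul_one, one_mul,
    Finset.sum_add_distrib, Finset.sum_ite_eq, Finset.sum_ite_eq', Finset.mem_univ, if_true,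
    ← Finset.smul_sum, sum_crossBlock_mul_crossBlock hA]
  split_ifs <;> module

variable [FiniteDimensional ℂ W]

theorem adjoint_tensE (k : Fin 3) :
    LinearMap.adjoint (tensE W k) = PiLp.projₗ 2 (fun _ : Fin 3 => W) k := by
  symm
  rw [LinearMap.eq_adjoint_iff]
  intro x φ
  rw [PiLp.inner_apply, Finset.sum_eq_single k (fun b _ hb => by simp [tensE_apply, hb])
    (by simp)]
  simp [tensE_apply]

theorem adjoint_smul_comp_tensE_comp {U : Type*} [NormedAddCommGroup U] [InnerProductSpace ℂ U]
    [FiniteDimensional ℂ U] (f : U →ₗ[ℂ] 𝕍) (r : ℝ) (k l : Fin 3) :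
    LinearMap.adjoint ((r : ℂ) • (LinearMap.adjoint f ∘ₗ tensE W k)) ∘ₗ
        ((r : ℂ) • (LinearMap.adjoint f ∘ₗ tensE W l))
      = ((r ^ 2 : ℝ) : ℂ) • block k l (f ∘ₗ LinearMap.adjoint f) := by
  rw [LinearEquiv.map_smulₛₗ, LinearMap.adjoint_comp, LinearMap.adjoint_adjoint, adjoint_tensE,
    Complex.conj_ofReal, LinearMap.smul_comp, LinearMap.comp_smul, smul_smul]
  push_cast
  rw [sq]
  rfl

end Blocks

theorem algebraic_weitzenbock_second_general (j : ℕ)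
    (W Wm Wp : Type*)
    [NormedAddCommGroup W] [InnerProductSpace ℂ W] [FiniteDimensional ℂ W]
    [NormedAddCommGroup Wm] [InnerProductSpace ℂ Wm] [FiniteDimensional ℂ Wm]
    [NormedAddCommGroup Wp] [InnerProductSpace ℂ Wp] [FiniteDimensional ℂ Wp]
    (A : Fin 3 → W →ₗ[ℂ] W) (Am : Fin 3 → Wm →ₗ[ℂ] Wm) (Ap : Fin 3 → Wp →ₗ[ℂ] Wp)
    (hAbr : ∀ k l, A k ∘ₗ A l - A l ∘ₗ A k = ∑ m, ((2 * epsLC k l m : ℤ) : ℂ) • A m)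
    (hcasW : ∑ i, A i ∘ₗ A i = (-((2 * (j : ℂ) + 1) * (2 * (j : ℂ) + 3))) • LinearMap.id)
    (hcasm : ∑ i, Am i ∘ₗ Am i = (-((2 * (j : ℂ) - 1) * (2 * (j : ℂ) + 1))) • LinearMap.id)
    (hcasp : ∑ i, Ap i ∘ₗ Ap i = (-((2 * (j : ℂ) + 3) * (2 * (j : ℂ) + 5))) • LinearMap.id)
    (ρT : Fin 3 → (PiLp 2 fun _ : Fin 3 => W) →ₗ[ℂ] (PiLp 2 fun _ : Fin 3 => W))
    (hρT : ∀ k f i, (WithLp.equiv 2 (∀ _ : Fin 3, W)) (ρT k f) i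
      = A k ((WithLp.equiv 2 (∀ _ : Fin 3, W)) f i)
        + ∑ m, ((2 * epsLC k m i : ℤ) : ℂ) • (WithLp.equiv 2 (∀ _ : Fin 3, W)) f m)
    (ι0 : W →ₗ[ℂ] PiLp 2 fun _ : Fin 3 => W)
    (ιm : Wm →ₗ[ℂ] PiLp 2 fun _ : Fin 3 => W)
    (ιp : Wp →ₗ[ℂ] PiLp 2 fun _ : Fin 3 => W)
    (hcomplete : ι0 ∘ₗ LinearMap.adjoint ι0 + ιm ∘ₗ LinearMap.adjoint ιm
      + ιp ∘ₗ LinearMap.adjoint ιp = LinearMap.id)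
    (h0equiv : ∀ k, ι0 ∘ₗ A k = ρT k ∘ₗ ι0)
    (hmequiv : ∀ k, ιm ∘ₗ Am k = ρT k ∘ₗ ιm)
    (hpequiv : ∀ k, ιp ∘ₗ Ap k = ρT k ∘ₗ ιp) :
    ∀ k l,
      ((-((j : ℂ) + 1 / 2)) * ((2 * (j : ℂ) + 3) / (4 * ((j : ℂ) + 1)))) •
        ((-(LinearMap.adjoint (((Real.sqrt (4 * ((j : ℝ) + 1) / (2 * (j : ℝ) + 3)) : ℝ) : ℂ) • (LinearMap.adjoint ιp ∘ₗ tensE W k)))) ∘ₗ (((Real.sqrt (4 * ((j : ℝ) + 1) / (2 * (j : ℝ) + 3)) : ℝ) : ℂ) • (LinearMap.adjoint ιp ∘ₗ tensE W l)))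
      + (1 / ((2 * (j : ℂ) + 3) * (2 * (j : ℂ) + 1))) • (A k ∘ₗ A l)
      + ((((j : ℂ) + 3 / 2)) * ((2 * (j : ℂ) + 1) / (4 * ((j : ℂ) + 1)))) •
        ((-(LinearMap.adjoint (((Real.sqrt (4 * ((j : ℝ) + 1) / (2 * (j : ℝ) + 1)) : ℝ) : ℂ) • (LinearMap.adjoint ιm ∘ₗ tensE W k)))) ∘ₗ (((Real.sqrt (4 * ((j : ℝ) + 1) / (2 * (j : ℝ) + 1)) : ℝ) : ℂ) • (LinearMap.adjoint ιm ∘ₗ tensE W l)))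
      = (1 / 4 : ℂ) • ∑ m, ((2 * epsLC k l m : ℤ) : ℂ) • A m := by
  intro k l
  set P : Fin 3 → Module.End ℂ (PiLp 2 fun _ : Fin 3 => W) :=
    ![ι0 ∘ₗ LinearMap.adjoint ι0, ιm ∘ₗ LinearMap.adjoint ιm, ιp ∘ₗ LinearMap.adjoint ιp]
  set c : Fin 3 → ℂ := ![-((2 * (j : ℂ) + 1) * (2 * (j : ℂ) + 3)),
    -((2 * (j : ℂ) - 1) * (2 * (j : ℂ) + 1)), -((2 * (j : ℂ) + 3) * (2 * (j : ℂ) + 5))]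
  have hCasimir (s : Fin 3) : (∑ i, ρT i * ρT i) * P s = c s • P s := by
    fin_cases s <;> simp [P, c, Module.End.mul_eq_comp, ← LinearMap.comp_assoc,
      LinearMap.smul_comp, sum_comp_self_comp_of_intertwines h0equiv hcasW,
      sum_comp_self_comp_of_intertwines hmequiv hcasm,
      sum_comp_self_comp_of_intertwines hpequiv hcasp]
  have hP : ∑ s, P s = 1 := by simpa [P, Fin.sum_univ_three, Module.End.one_eq_id] using hcomplete
  have hblock (n : ℕ) := congr_arg (block k l) (pow_eq_sum_smul_of_mul_eq_smul hP hCasimir n)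
  have h0 := hblock 0
  have h1 := hblock 1
  have h2 := hblock 2
  rw [pow_zero, block_one] at h0
  rw [pow_one, block_sum_mul_self hρT hcasW] at h1
  rw [block_sum_mul_self_sq hρT hcasW] at h2
  simp only [Fin.sum_univ_three, map_add, map_smul, pow_zero, pow_one, one_smul, P, c,
    Matrix.cons_val_zero, Matrix.cons_val_one, Matrix.cons_val_two, Matrix.head_cons,
    Matrix.tail_cons] at h0 h1 h2
  rw [LinearMap.neg_comp, LinearMap.neg_comp, adjoint_smul_comp_tensE_comp,
    adjoint_smul_comp_tensE_comp, Real.sq_sqrt (by positivity), Real.sq_sqrt (by positivity)]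
  have hbr := two_smul_crossBlock hAbr k l
  have hcomm : A k * A l - A l * A k = ∑ m, ((2 * epsLC k l m : ℤ) : ℂ) • A m := hAbr k l
  rw [← Module.End.mul_eq_comp (A k)]
  have hj1 : (j : ℂ) + 1 ≠ 0 := by norm_cast
  have h2j1 : (j : ℂ) * 2 + 1 ≠ 0 := by norm_cast
  have h2j3 : (j : ℂ) * 2 + 3 ≠ 0 := by norm_cast
  push_cast at hcomm ⊢
  -- The coefficients of `h0, h1, h2` are those of the quadratic `q` with `q(c₀) = 0`,
  -- `q(c₋) = j + 3/2`, `q(c₊) = -(j + 1/2)`: it eliminates `X₀` and matches the goal in `X₋, X₊`.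
  split_ifs at h0 h1 h2 <;>
  linear_combination (norm := skip)
    ((12 * (j : ℂ) ^ 2 + 24 * j + 17) / 16) • h0
    + ((4 * (j : ℂ) ^ 2 + 8 * j + 5) / (4 * ((2 * j + 1) * (2 * j + 3)))) • h1
    + (1 / (16 * ((2 * (j : ℂ) + 1) * (2 * j + 3)))) • h2
    + (1 / ((2 * (j : ℂ) + 1) * (2 * j + 3)) - 1 / 4) • hbr + (1 / 4 : ℂ) • hcomm
  all_goals match_scalars <;> field_simp [hj1, h2j1, h2j3] <;> ring

/-- In dimension 3, the second algebraic Weitzenböck relation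
`-(j+1/2)((2j+3)/(4(j+1)))π⁻_{j+1}(e_k)π⁺_j(e_l) + (1/((2j+3)(2j+1)))π_j(e_k)π_j(e_l)
 + (j+3/2)((2j+1)/(4(j+1)))π⁺_{j-1}(e_k)π⁻_j(e_l) = (1/4)π_j([e_k,e_l])` on `W_j`,
with `[e_k,e_l] = 2Σ_m ε_{klm} e_m` the `su(2)` bracket.  (Same setup and conventions as
the first algebraic Weitzenböck relation.) -/
theorem algebraic_weitzenbock_second (j : ℕ)
    (W Wm Wp : Type*)
    [NormedAddCommGroup W] [InnerProductSpace ℂ W] [FiniteDimensional ℂ W]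
    [NormedAddCommGroup Wm] [InnerProductSpace ℂ Wm] [FiniteDimensional ℂ Wm]
    [NormedAddCommGroup Wp] [InnerProductSpace ℂ Wp] [FiniteDimensional ℂ Wp]
    (hdW : Module.finrank ℂ W = 2 * j + 2)
    (hdm : Module.finrank ℂ Wm = 2 * j)
    (hdp : Module.finrank ℂ Wp = 2 * j + 4)
    (A : Fin 3 → W →ₗ[ℂ] W) (Am : Fin 3 → Wm →ₗ[ℂ] Wm) (Ap : Fin 3 → Wp →ₗ[ℂ] Wp)
    (hAskew : ∀ k, LinearMap.adjoint (A k) = -A k)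
    (hAmskew : ∀ k, LinearMap.adjoint (Am k) = -Am k)
    (hApskew : ∀ k, LinearMap.adjoint (Ap k) = -Ap k)
    (hAbr : ∀ k l, A k ∘ₗ A l - A l ∘ₗ A k = ∑ m, ((2 * epsLC k l m : ℤ) : ℂ) • A m)
    (hAmbr : ∀ k l, Am k ∘ₗ Am l - Am l ∘ₗ Am k = ∑ m, ((2 * epsLC k l m : ℤ) : ℂ) • Am m)
    (hApbr : ∀ k l, Ap k ∘ₗ Ap l - Ap l ∘ₗ Ap k = ∑ m, ((2 * epsLC k l m : ℤ) : ℂ) • Ap m)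
    (hcasW : ∑ i, A i ∘ₗ A i = (-((2 * (j : ℂ) + 1) * (2 * (j : ℂ) + 3))) • LinearMap.id)
    (hcasm : ∑ i, Am i ∘ₗ Am i = (-((2 * (j : ℂ) - 1) * (2 * (j : ℂ) + 1))) • LinearMap.id)
    (hcasp : ∑ i, Ap i ∘ₗ Ap i = (-((2 * (j : ℂ) + 3) * (2 * (j : ℂ) + 5))) • LinearMap.id)
    (hirr : ∀ q : Submodule ℂ W, (∀ i, q.map (A i) ≤ q) → q = ⊥ ∨ q = ⊤)
    (ρT : Fin 3 → (PiLp 2 fun _ : Fin 3 => W) →ₗ[ℂ] (PiLp 2 fun _ : Fin 3 => W))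
    (hρT : ∀ k f i, (WithLp.equiv 2 (∀ _ : Fin 3, W)) (ρT k f) i
      = A k ((WithLp.equiv 2 (∀ _ : Fin 3, W)) f i)
        + ∑ m, ((2 * epsLC k m i : ℤ) : ℂ) • (WithLp.equiv 2 (∀ _ : Fin 3, W)) f m)
    (ι0 : W →ₗ[ℂ] PiLp 2 fun _ : Fin 3 => W)
    (ιm : Wm →ₗ[ℂ] PiLp 2 fun _ : Fin 3 => W)
    (ιp : Wp →ₗ[ℂ] PiLp 2 fun _ : Fin 3 => W)
    (h0iso : LinearMap.adjoint ι0 ∘ₗ ι0 = LinearMap.id)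
    (hmiso : LinearMap.adjoint ιm ∘ₗ ιm = LinearMap.id)
    (hpiso : LinearMap.adjoint ιp ∘ₗ ιp = LinearMap.id)
    (hcomplete : ι0 ∘ₗ LinearMap.adjoint ι0 + ιm ∘ₗ LinearMap.adjoint ιm
      + ιp ∘ₗ LinearMap.adjoint ιp = LinearMap.id)
    (h0equiv : ∀ k, ι0 ∘ₗ A k = ρT k ∘ₗ ι0)
    (hmequiv : ∀ k, ιm ∘ₗ Am k = ρT k ∘ₗ ιm)
    (hpequiv : ∀ k, ιp ∘ₗ Ap k = ρT k ∘ₗ ιp) :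
    ∀ k l,
      ((-((j : ℂ) + 1 / 2)) * ((2 * (j : ℂ) + 3) / (4 * ((j : ℂ) + 1)))) •
        ((-(LinearMap.adjoint (((Real.sqrt (4 * ((j : ℝ) + 1) / (2 * (j : ℝ) + 3)) : ℝ) : ℂ) • (LinearMap.adjoint ιp ∘ₗ tensE W k)))) ∘ₗ (((Real.sqrt (4 * ((j : ℝ) + 1) / (2 * (j : ℝ) + 3)) : ℝ) : ℂ) • (LinearMap.adjoint ιp ∘ₗ tensE W l)))
      + (1 / ((2 * (j : ℂ) + 3) * (2 * (j : ℂ) + 1))) • (A k ∘ₗ A l)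
      + ((((j : ℂ) + 3 / 2)) * ((2 * (j : ℂ) + 1) / (4 * ((j : ℂ) + 1)))) •
        ((-(LinearMap.adjoint (((Real.sqrt (4 * ((j : ℝ) + 1) / (2 * (j : ℝ) + 1)) : ℝ) : ℂ) • (LinearMap.adjoint ιm ∘ₗ tensE W k)))) ∘ₗ (((Real.sqrt (4 * ((j : ℝ) + 1) / (2 * (j : ℝ) + 1)) : ℝ) : ℂ) • (LinearMap.adjoint ιm ∘ₗ tensE W l)))
      = (1 / 4 : ℂ) • ∑ m, ((2 * epsLC k l m : ℤ) : ℂ) • A m :=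
  algebraic_weitzenbock_second_general j W Wm Wp A Am Ap hAbr hcasW hcasm hcasp ρT hρT ι0 ιm ιp
    hcomplete h0equiv hmequiv hpequiv
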